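/- arXiv:1206.0917 — 3 statements merged into one kernel-verified Lean document; each statement's English description precedes it below -/
import Mathlib

section
/- Let n₁, n₂ > 0 and let a = tr(Σ₁²) > 0, b = tr(Σ₂²) > 0 be positive reals. Then (2a/n₂ + 2b/n₁) / √(4a²/n₁² + 4b²/n₂²) ≤ ((n₁/(n₁+n₂))·(n₂/(n₁+n₂)))^{−1}. -/
theorem Z_bound (n₁ n₂ a b : ℝ) (hn₁ : 0 < n₁) (hn₂ : 0 < n₂)
    (ha : 0 < a) (hb : 0 < b) :
    (2 * a / n₂ + 2 * b / n₁) /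
        Real.sqrt (4 * a ^ 2 / n₁ ^ 2 + 4 * b ^ 2 / n₂ ^ 2) ≤
      ((n₁ / (n₁ + n₂)) * (n₂ / (n₁ + n₂)))⁻¹ := by
  have hn : 0 < n₁ + n₂ := by linarith
  have hS : 0 < 4 * a ^ 2 / n₁ ^ 2 + 4 * b ^ 2 / n₂ ^ 2 := by positivity
  have hc : (0:ℝ) < ((n₁ / (n₁ + n₂)) * (n₂ / (n₁ + n₂)))⁻¹ := by positivity
  rw [div_le_iff₀ (Real.sqrt_pos.mpr hS)]
  have hx : (0:ℝ) ≤ 2 * a / n₂ + 2 * b / n₁ := by positivity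
  have key : (2 * a / n₂ + 2 * b / n₁) ^ 2 ≤
      (((n₁ / (n₁ + n₂)) * (n₂ / (n₁ + n₂)))⁻¹) ^ 2 *
        (4 * a ^ 2 / n₁ ^ 2 + 4 * b ^ 2 / n₂ ^ 2) := by
    field_simp
    have h0 : n₁ ^ 4 + n₂ ^ 4 ≤ (n₁ + n₂) ^ 4 := by nlinarith [mul_pos hn₁ hn₂, sq_nonneg (n₁ + n₂), mul_pos (mul_pos hn₁ hn₂) (mul_pos hn₁ hn₂), mul_pos (mul_pos hn₁ hn₁) (mul_pos hn₁ hn₂), mul_pos (mul_pos hn₂ hn₂) (mul_pos hn₁ hn₂)]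
    have h1 : (a ^ 2 * n₂ ^ 2 + b ^ 2 * n₁ ^ 2) * (n₁ ^ 4 + n₂ ^ 4) ≤
        (a ^ 2 * n₂ ^ 2 + b ^ 2 * n₁ ^ 2) * (n₁ + n₂) ^ 4 :=
      mul_le_mul_of_nonneg_left h0 (by positivity)
    nlinarith [mul_le_mul_of_nonneg_right h1 (sq_nonneg (n₁ * n₂)),
      mul_nonneg (sq_nonneg (a * n₂ ^ 3 - b * n₁ ^ 3)) (sq_nonneg (n₁ * n₂))]
  calc 2 * a / n₂ + 2 * b / n₁
      = Real.sqrt ((2 * a / n₂ + 2 * b / n₁) ^ 2) := (Real.sqrt_sq hx).symm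
    _ ≤ Real.sqrt ((((n₁ / (n₁ + n₂)) * (n₂ / (n₁ + n₂)))⁻¹) ^ 2 *
        (4 * a ^ 2 / n₁ ^ 2 + 4 * b ^ 2 / n₂ ^ 2)) := Real.sqrt_le_sqrt key
    _ = _ := by
        rw [Real.sqrt_mul (by positivity), Real.sqrt_sq hc.le]
end

section
/- Let n₁, n₂ > 0 and a = tr(Σ_{1,12}Σ_{1,12}') ≥ 0, b = tr(Σ_{2,12}Σ_{2,12}') ≥ 0, c₁ = tr(Σ_{1,11}²)tr(Σ_{1,22}²), c₂ = tr(Σ_{2,11}²)tr(Σ_{2,22}²), c₁₂ = tr(Σ_{1,11}Σ_{2,11})tr(Σ_{1,22}Σ_{2,22}), with a² ≤ c₁, b² ≤ c₂, and c₁₂² ≤ c₁c₂, c₁,c₂ > 0. Define ω̃² = 2(a/n₂ + b/n₁)² + 2c₁/n₁² + 2c₂/n₂² + 4c₁₂/(n₁n₂) and ω² ≥ 2a²/n₁² + 2c₁/n₁² + 2b²/n₂² + 2c₂/n₂² + 4c₁₂/(n₁n₂) (taking ω² equal to this lower bound). Then ω̃²/ω² ≤ R²(η) + 1, where η = a/b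 (assume b > 0) and R(η) = (k/(1−k)·η + 1)(η² + (k/(1−k))²)^{−1/2} with k = n₁/(n₁+n₂). -/
theorem omega_ratio_bound (n₁ n₂ a b c₁ c₂ c₁₂ : ℝ)
    (hn₁ : 0 < n₁) (hn₂ : 0 < n₂)
    (ha : 0 ≤ a) (hb : 0 < b)
    (hc₁ : 0 < c₁) (hc₂ : 0 < c₂)
    (ha2 : a ^ 2 ≤ c₁) (hb2 : b ^ 2 ≤ c₂) (hc12 : c₁₂ ^ 2 ≤ c₁ * c₂) :
    (2 * (a / n₂ + b / n₁) ^ 2 + 2 * c₁ / n₁ ^ 2 + 2 * c₂ / n₂ ^ 2 +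
        4 * c₁₂ / (n₁ * n₂)) /
      (2 * a ^ 2 / n₁ ^ 2 + 2 * c₁ / n₁ ^ 2 + 2 * b ^ 2 / n₂ ^ 2 +
        2 * c₂ / n₂ ^ 2 + 4 * c₁₂ / (n₁ * n₂)) ≤
    ((n₁ / (n₁ + n₂) / (1 - n₁ / (n₁ + n₂)) * (a / b) + 1) /
        Real.sqrt ((a / b) ^ 2 + (n₁ / (n₁ + n₂) / (1 - n₁ / (n₁ + n₂))) ^ 2)) ^ 2
      + 1 := by
  have hn₁' : n₁ ≠ 0 := ne_of_gt hn₁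
  have hn₂' : n₂ ≠ 0 := ne_of_gt hn₂
  have hb' : b ≠ 0 := ne_of_gt hb
  have hs : 0 < n₁ + n₂ := by linarith
  have hr : n₁ / (n₁ + n₂) / (1 - n₁ / (n₁ + n₂)) = n₁ / n₂ := by
    rw [div_div]
    congr 1
    field_simp
    ring
  -- key positivity of C
  have key : 0 ≤ c₁ * n₂ ^ 2 + c₂ * n₁ ^ 2 + 2 * c₁₂ * (n₁ * n₂) := by
    by_contra h
    push_neg at h
    have hn12 : 0 < n₁ ^ 2 := by positivity
    have hn22 : 0 < n₂ ^ 2 := by positivity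
    have hM : 0 < c₁ * n₂ ^ 2 + c₂ * n₁ ^ 2 - 2 * c₁₂ * (n₁ * n₂) := by
      nlinarith [mul_pos hc₁ hn22, mul_pos hc₂ hn12]
    nlinarith [mul_pos hM (by linarith : (0:ℝ) < -(c₁ * n₂ ^ 2 + c₂ * n₁ ^ 2 + 2 * c₁₂ * (n₁ * n₂))),
      sq_nonneg (c₁ * n₂ ^ 2 - c₂ * n₁ ^ 2), mul_pos (mul_pos hn12 hn22) hc₁]
  set C : ℝ := 2 * c₁ / n₁ ^ 2 + 2 * c₂ / n₂ ^ 2 + 4 * c₁₂ / (n₁ * n₂) with hCdef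
  set D : ℝ := 2 * a ^ 2 / n₁ ^ 2 + 2 * b ^ 2 / n₂ ^ 2 with hDdef
  set N : ℝ := 2 * (a / n₂ + b / n₁) ^ 2 with hNdef
  have hC : 0 ≤ C := by
    have h2 : C = 2 * (c₁ * n₂ ^ 2 + c₂ * n₁ ^ 2 + 2 * c₁₂ * (n₁ * n₂)) / (n₁ ^ 2 * n₂ ^ 2) := by
      rw [hCdef]; field_simp; ring
    rw [h2]
    apply div_nonneg (by linarith) (by positivity)
  have hD : 0 < D := by
    have h1 : 0 ≤ 2 * a ^ 2 / n₁ ^ 2 := by positivity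
    have h2 : 0 < 2 * b ^ 2 / n₂ ^ 2 := by positivity
    rw [hDdef]; linarith
  have hN : 0 ≤ N := by positivity
  have hDC : 0 < D + C := by linarith
  -- main inequality
  have main : (N + C) / (D + C) ≤ N / D + 1 := by
    have h1 : (N + C) / (D + C) = N / (D + C) + C / (D + C) := by ring
    rw [h1]
    have h2 : N / (D + C) ≤ N / D := by gcongr; linarith
    have h3 : C / (D + C) ≤ 1 := by
      rw [div_le_one hDC]; linarith
    linarith
  -- identify LHS
  have hLHS : (2 * (a / n₂ + b / n₁) ^ 2 + 2 * c₁ / n₁ ^ 2 + 2 * c₂ / n₂ ^ 2 +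
        4 * c₁₂ / (n₁ * n₂)) /
      (2 * a ^ 2 / n₁ ^ 2 + 2 * c₁ / n₁ ^ 2 + 2 * b ^ 2 / n₂ ^ 2 +
        2 * c₂ / n₂ ^ 2 + 4 * c₁₂ / (n₁ * n₂)) = (N + C) / (D + C) := by
    rw [hNdef, hCdef, hDdef]; ring_nf
  -- identify RHS
  have hpos : 0 < (a / b) ^ 2 + (n₁ / n₂) ^ 2 := by positivity
  have hRHS : ((n₁ / (n₁ + n₂) / (1 - n₁ / (n₁ + n₂)) * (a / b) + 1) /
        Real.sqrt ((a / b) ^ 2 + (n₁ / (n₁ + n₂) / (1 - n₁ / (n₁ + n₂))) ^ 2)) ^ 2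
      = N / D := by
    rw [hr, div_pow, Real.sq_sqrt (le_of_lt hpos), hNdef, hDdef]
    rw [div_eq_div_iff (ne_of_gt hpos) (by rw [← hDdef]; exact ne_of_gt hD)]
    field_simp
  rw [hLHS, hRHS]
  exact main
end

section
/- Let Σ₁, Σ₂ be real symmetric PSD p×p matrices, Γ₁ a p×m matrix with Γ₁Γ₁' = Σ₁, Γ₂ a p×m' matrix with Γ₂Γ₂' = Σ₂, and Δ₁, Δ₂ ≥ −2 real numbers, n₁, n₂ > 0. Then the quantity σ² = Σ_{i=1}^2 [ (4/n_i²)tr²(Σ_i²) + (8/n_i)tr{(Σ_i²−Σ_iΣ_j)'(Σ_i²−Σ_iΣ_j)} + (4Δ_i/n_i)tr{Γ_i'(Σ₁−Σ₂)Γ_i ∘ Γ_i'(Σ₁−Σ₂)Γ_i} ] + (8/(n₁n₂))tr²(Σ₁Σ₂), where j ≠ i, is nonnegative; moreover if Σ₁ ≠ 0 or Σ₂ ≠ 0 then σ² > 0. -/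
open Matrix

private lemma tr_tmul_nonneg {a b : ℕ} (M : Matrix (Fin a) (Fin b) ℝ) :
    0 ≤ (Mᵀ * M).trace := by
  simp only [Matrix.trace, Matrix.diag, Matrix.mul_apply, Matrix.transpose_apply]
  exact Finset.sum_nonneg fun i _ => Finset.sum_nonneg fun k _ => mul_self_nonneg _

private lemma tr_tmul_pos {a b : ℕ} (M : Matrix (Fin a) (Fin b) ℝ) (hM : M ≠ 0) :
    0 < (Mᵀ * M).trace := by
  rcases lt_or_eq_of_le (tr_tmul_nonneg M) with h | h
  · exact h
  exfalso; apply hM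
  have h' : ∑ i, ∑ k, M k i * M k i = 0 := by
    simpa only [Matrix.trace, Matrix.diag, Matrix.mul_apply, Matrix.transpose_apply] using h.symm
  ext k i
  have h1 : ∀ i ∈ Finset.univ, (0:ℝ) ≤ ∑ k, M k i * M k i :=
    fun i _ => Finset.sum_nonneg fun k _ => mul_self_nonneg _
  have h2 := (Finset.sum_eq_zero_iff_of_nonneg h1).1 h' i (Finset.mem_univ i)
  have h3 := (Finset.sum_eq_zero_iff_of_nonneg
    (fun k _ => mul_self_nonneg (M k i))).1 h2 k (Finset.mem_univ k)
  simpa [mul_self_eq_zero] using h3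

private lemma hadamard_tr_nonneg {a : ℕ} (H : Matrix (Fin a) (Fin a) ℝ) :
    0 ≤ (Matrix.hadamard H H).trace :=
  Finset.sum_nonneg fun i _ => mul_self_nonneg _

private lemma hadamard_tr_le {a : ℕ} (H : Matrix (Fin a) (Fin a) ℝ) :
    (Matrix.hadamard H H).trace ≤ (Hᵀ * H).trace := by
  simp only [Matrix.trace, Matrix.diag, Matrix.mul_apply, Matrix.transpose_apply,
    Matrix.hadamard_apply]
  exact Finset.sum_le_sum fun i _ =>
    Finset.single_le_sum (f := fun k => H k i * H k i)
      (fun k _ => mul_self_nonneg _) (Finset.mem_univ i)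

private lemma sq_tr_le {a : ℕ} (X : Matrix (Fin a) (Fin a) ℝ) :
    (X * X).trace ≤ (Xᵀ * X).trace := by
  have h0 := tr_tmul_nonneg (X - Xᵀ)
  have h1 : ((X - Xᵀ)ᵀ * (X - Xᵀ)).trace
      = 2 * ((Xᵀ * X).trace - (X * X).trace) := by
    simp only [Matrix.transpose_sub, Matrix.sub_mul, Matrix.mul_sub, Matrix.trace_sub,
      Matrix.transpose_transpose]
    rw [Matrix.trace_mul_comm X Xᵀ, ← Matrix.trace_transpose (Xᵀ * Xᵀ)]
    simp only [Matrix.transpose_mul, Matrix.transpose_transpose]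
    ring
  linarith

private lemma key_bound {p m : ℕ} (S B : Matrix (Fin p) (Fin p) ℝ)
    (hS : Sᵀ = S) (hB : Bᵀ = B)
    (G : Matrix (Fin p) (Fin m) ℝ) (hG : G * Gᵀ = S) :
    (Matrix.hadamard (Gᵀ * B * G) (Gᵀ * B * G)).trace ≤ ((S * B)ᵀ * (S * B)).trace := by
  set H := Gᵀ * B * G with hH
  have hHt : Hᵀ = H := by
    rw [hH]; simp only [Matrix.transpose_mul, Matrix.transpose_transpose, hB, Matrix.mul_assoc]
  have step1 : (Matrix.hadamard H H).trace ≤ (H * H).trace := by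
    have := hadamard_tr_le H; rwa [hHt] at this
  have step2 : (H * H).trace = ((B * S) * (B * S)).trace := by
    rw [hH]
    calc (Gᵀ * B * G * (Gᵀ * B * G)).trace
        = (Gᵀ * (B * (G * Gᵀ) * (B * G))).trace := by
          rw [show Gᵀ * B * G * (Gᵀ * B * G) = Gᵀ * (B * (G * Gᵀ) * (B * G)) by
            simp only [Matrix.mul_assoc]]
      _ = ((B * S * (B * G)) * Gᵀ).trace := by rw [hG, Matrix.trace_mul_comm]
      _ = (B * S * (B * (G * Gᵀ))).trace := by
          rw [show B * S * (B * G) * Gᵀ = B * S * (B * (G * Gᵀ)) by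
            simp only [Matrix.mul_assoc]]
      _ = ((B * S) * (B * S)).trace := by rw [hG]
  have step3 : ((B * S) * (B * S)).trace ≤ ((B * S)ᵀ * (B * S)).trace := sq_tr_le _
  have step4 : ((B * S)ᵀ * (B * S)).trace = ((S * B)ᵀ * (S * B)).trace := by
    simp only [Matrix.transpose_mul, hS, hB]
    rw [Matrix.trace_mul_comm]
  linarith

theorem variance_positive {p m₁ m₂ : ℕ}
    (S1 S2 : Matrix (Fin p) (Fin p) ℝ)
    (hS1 : S1.PosSemidef) (hS2 : S2.PosSemidef)
    (G1 : Matrix (Fin p) (Fin m₁) ℝ) (hG1 : G1 * G1ᵀ = S1)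
    (G2 : Matrix (Fin p) (Fin m₂) ℝ) (hG2 : G2 * G2ᵀ = S2)
    (Δ₁ Δ₂ : ℝ) (hΔ₁ : -2 ≤ Δ₁) (hΔ₂ : -2 ≤ Δ₂)
    (n₁ n₂ : ℝ) (hn₁ : 0 < n₁) (hn₂ : 0 < n₂) :
    0 ≤ (4 / n₁ ^ 2) * ((S1 * S1).trace) ^ 2
        + (8 / n₁) * ((S1 * S1 - S1 * S2)ᵀ * (S1 * S1 - S1 * S2)).trace
        + (4 * Δ₁ / n₁) *
            (Matrix.hadamard (G1ᵀ * (S1 - S2) * G1) (G1ᵀ * (S1 - S2) * G1)).trace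
        + (4 / n₂ ^ 2) * ((S2 * S2).trace) ^ 2
        + (8 / n₂) * ((S2 * S2 - S2 * S1)ᵀ * (S2 * S2 - S2 * S1)).trace
        + (4 * Δ₂ / n₂) *
            (Matrix.hadamard (G2ᵀ * (S1 - S2) * G2) (G2ᵀ * (S1 - S2) * G2)).trace
        + (8 / (n₁ * n₂)) * ((S1 * S2).trace) ^ 2 ∧
    ((S1 ≠ 0 ∨ S2 ≠ 0) →
      0 < (4 / n₁ ^ 2) * ((S1 * S1).trace) ^ 2
        + (8 / n₁) * ((S1 * S1 - S1 * S2)ᵀ * (S1 * S1 - S1 * S2)).trace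
        + (4 * Δ₁ / n₁) *
            (Matrix.hadamard (G1ᵀ * (S1 - S2) * G1) (G1ᵀ * (S1 - S2) * G1)).trace
        + (4 / n₂ ^ 2) * ((S2 * S2).trace) ^ 2
        + (8 / n₂) * ((S2 * S2 - S2 * S1)ᵀ * (S2 * S2 - S2 * S1)).trace
        + (4 * Δ₂ / n₂) *
            (Matrix.hadamard (G2ᵀ * (S1 - S2) * G2) (G2ᵀ * (S1 - S2) * G2)).trace
        + (8 / (n₁ * n₂)) * ((S1 * S2).trace) ^ 2) := by
  have hS1t : S1ᵀ = S1 := hS1.1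
  have hS2t : S2ᵀ = S2 := hS2.1
  have hBt : (S1 - S2)ᵀ = S1 - S2 := by rw [Matrix.transpose_sub, hS1t, hS2t]
  have hBt' : (S2 - S1)ᵀ = S2 - S1 := by rw [Matrix.transpose_sub, hS1t, hS2t]
  -- term 1 bound
  have hk1 : (Matrix.hadamard (G1ᵀ * (S1 - S2) * G1) (G1ᵀ * (S1 - S2) * G1)).trace
      ≤ ((S1 * S1 - S1 * S2)ᵀ * (S1 * S1 - S1 * S2)).trace := by
    rw [show S1 * S1 - S1 * S2 = S1 * (S1 - S2) from (Matrix.mul_sub S1 S1 S2).symm]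
    exact key_bound S1 (S1 - S2) hS1t hBt G1 hG1
  -- term 2 bound: use B' = S2 - S1 and flip the hadamard argument
  have hneg : G2ᵀ * (S2 - S1) * G2 = -(G2ᵀ * (S1 - S2) * G2) := by
    rw [(neg_sub S1 S2).symm, Matrix.mul_neg, Matrix.neg_mul]
  have hhad : (Matrix.hadamard (G2ᵀ * (S2 - S1) * G2) (G2ᵀ * (S2 - S1) * G2))
      = Matrix.hadamard (G2ᵀ * (S1 - S2) * G2) (G2ᵀ * (S1 - S2) * G2) := by
    rw [hneg]; ext i j; simp [Matrix.hadamard_apply]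
  have hk2 : (Matrix.hadamard (G2ᵀ * (S1 - S2) * G2) (G2ᵀ * (S1 - S2) * G2)).trace
      ≤ ((S2 * S2 - S2 * S1)ᵀ * (S2 * S2 - S2 * S1)).trace := by
    rw [show S2 * S2 - S2 * S1 = S2 * (S2 - S1) from (Matrix.mul_sub S2 S2 S1).symm]
    have := key_bound S2 (S2 - S1) hS2t hBt' G2 hG2
    rwa [hhad] at this
  set t1 := (Matrix.hadamard (G1ᵀ * (S1 - S2) * G1) (G1ᵀ * (S1 - S2) * G1)).trace with ht1d
  set t2 := (Matrix.hadamard (G2ᵀ * (S1 - S2) * G2) (G2ᵀ * (S1 - S2) * G2)).trace with ht2d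
  set a1 := ((S1 * S1 - S1 * S2)ᵀ * (S1 * S1 - S1 * S2)).trace with ha1d
  set a2 := ((S2 * S2 - S2 * S1)ᵀ * (S2 * S2 - S2 * S1)).trace with ha2d
  have ht1 : 0 ≤ t1 := hadamard_tr_nonneg _
  have ht2 : 0 ≤ t2 := hadamard_tr_nonneg _
  -- main mixed-term bounds
  have k1 : 0 ≤ 8 / n₁ * a1 + 4 * Δ₁ / n₁ * t1 := by
    have e1 : 0 ≤ 8 / n₁ * (a1 - t1) := mul_nonneg (by positivity) (by linarith)
    have e2 : 0 ≤ (Δ₁ + 2) / n₁ * t1 :=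
      mul_nonneg (div_nonneg (by linarith) hn₁.le) ht1
    have eq : 8 / n₁ * a1 + 4 * Δ₁ / n₁ * t1
        = 8 / n₁ * (a1 - t1) + 4 * ((Δ₁ + 2) / n₁ * t1) := by ring
    linarith
  have k2 : 0 ≤ 8 / n₂ * a2 + 4 * Δ₂ / n₂ * t2 := by
    have e1 : 0 ≤ 8 / n₂ * (a2 - t2) := mul_nonneg (by positivity) (by linarith)
    have e2 : 0 ≤ (Δ₂ + 2) / n₂ * t2 :=
      mul_nonneg (div_nonneg (by linarith) hn₂.le) ht2
    have eq : 8 / n₂ * a2 + 4 * Δ₂ / n₂ * t2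
        = 8 / n₂ * (a2 - t2) + 4 * ((Δ₂ + 2) / n₂ * t2) := by ring
    linarith
  have sq1 : 0 ≤ 4 / n₁ ^ 2 * (S1 * S1).trace ^ 2 := by positivity
  have sq2 : 0 ≤ 4 / n₂ ^ 2 * (S2 * S2).trace ^ 2 := by positivity
  have sq3 : 0 ≤ 8 / (n₁ * n₂) * (S1 * S2).trace ^ 2 := by positivity
  constructor
  · linarith
  · rintro (h | h)
    · have hc1 : 0 < (S1 * S1).trace := by
        have := tr_tmul_pos S1 h; rwa [hS1t] at this
      have : 0 < 4 / n₁ ^ 2 * (S1 * S1).trace ^ 2 := by positivity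
      linarith
    · have hc2 : 0 < (S2 * S2).trace := by
        have := tr_tmul_pos S2 h; rwa [hS2t] at this
      have : 0 < 4 / n₂ ^ 2 * (S2 * S2).trace ^ 2 := by positivity
      linarith
end
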